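/- Let G_T be a G-system at t₀. Suppose G_u, G_v ∈ G_T, J ⊆ G_u ∩ G_v, G_u = T_J(G_t) and G_v = T_J(G_{t'}) where G_{t'} = μ_{g}(G_t) for some g ∈ G_t. If G_u ≠ G_v, then |G_u ∩ G_v| = n − 1, i.e., they are related by a single mutation. In particular, applying T_J to two bases related by one mutation yields bases related by at most one mutation. -/

import Mathlib

/-- A `G`-system at `t₀` (Definition 5.1.1): a collection of ℤ-bases of ℤⁿ, indexed by `T`,
satisfying the Mutation Condition, the Co-Bongartz Completion Condition and the
Uniqueness Condition. -/
structure GSystem (n : ℕ) (T : Type) (t₀ : T) where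
  g : T → Fin n → (Fin n → ℤ)
  indep : ∀ t, LinearIndependent ℤ (g t)
  span : ∀ t, Submodule.span ℤ (Set.range (g t)) = ⊤
  mutation : ∀ (t : T) (k : Fin n), ∃ t₁ : T,
    Set.range (g t) ∩ Set.range (g t₁) = Set.range (g t) \ {g t k}
  coBongartz : ∀ (t : T) (J : Set (Fin n → ℤ)), J ⊆ Set.range (g t₀) →
    ∃ t' : T, J ⊆ Set.range (g t') ∧
      ∀ (k : Fin n) (r : Fin n → ℤ), g t k = ∑ i, r i • g t' i →
        ∀ i, g t' i ∉ J → 0 ≤ r i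
  uniqueness : ∀ (u v : T) (I I' : Finset (Fin n)) (r r' : Fin n → ℤ),
    (∀ i ∈ I, 0 < r i) → (∀ j ∈ I', 0 < r' j) →
    (∑ i ∈ I, r i • g u i) = (∑ j ∈ I', r' j • g v j) →
    ∃ σ : Fin n → Fin n, Set.BijOn σ ↑I' ↑I ∧
      ∀ j ∈ I', r' j = r (σ j) ∧ g v j = g u (σ j)

/-- `G_{t'}` is a co-Bongartz completion of `J` with respect to `G_t`
(conditions (a) and (b) of Proposition-Definition 5.1.4). -/
def GSystem.IsCoB {n : ℕ} {T : Type} {t₀ : T} (S : GSystem n T t₀)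
    (J : Set (Fin n → ℤ)) (t t' : T) : Prop :=
  J ⊆ Set.range (S.g t') ∧
  ∀ (k : Fin n) (r : Fin n → ℤ), S.g t k = ∑ i, r i • S.g t' i →
    ∀ i, S.g t' i ∉ J → 0 ≤ r i

/-- `G_{t'}` is the mutation of `G_t` at `g_{k;t}`, i.e.
`G_t ∩ G_{t'} = G_t \ {g_{k;t}}` (Proposition-Definition 5.1.3). -/
def GSystem.IsMutationAt {n : ℕ} {T : Type} {t₀ : T} (S : GSystem n T t₀)
    (t t' : T) (k : Fin n) : Prop :=
  Set.range (S.g t) ∩ Set.range (S.g t') = Set.range (S.g t) \ {S.g t k}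

/-! The `n` vectors shared by `G_t` and `G_{t'}` expand with coefficients that are nonnegative
off `J` both in `G_u` and in `G_v`. Comparing the two expansions through the uniqueness
condition shows that every vector of `G_u` occurring with a positive coefficient lies in `G_v`.
Hence
every vector of `G_u \ G_v` gives a zero row of the coordinate matrix of the shared vectors in
`G_u`; as those `n` vectors are independent in rank `n + 1`, there is at most one such row. -/

open Function Finset

theorem Set.exists_inter_eq_diff_singleton_of_subsingleton {α : Type*} {A B : Set α}
    (hB : B.Finite) (hcard : B.ncard ≤ A.ncard) (hne : A ≠ B)
    (hsub : (A \ B).Subsingleton) : ∃ a ∈ A, A ∩ B = A \ {a} := by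
  obtain ⟨a, ha⟩ : (A \ B).Nonempty :=
    Set.sdiff_nonempty.mpr fun hAB => hne (Set.eq_of_subset_of_ncard_le hAB hcard hB)
  exact ⟨a, ha.1, by rw [← Set.sdiff_sdiff_right_self, hsub.eq_singleton_of_mem ha]⟩

theorem Module.Basis.card_add_two_le_of_repr_eq_zero {R M ι κ : Type*} [Ring R]
    [StrongRankCondition R] [AddCommGroup M] [Module R M] [Fintype ι] [Fintype κ]
    [DecidableEq κ] [DecidableEq M] (B : Module.Basis κ R M) {w : ι → M}
    (hw : LinearIndependent R w) {i₁ i₂ : κ} (h12 : i₁ ≠ i₂)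
    (h₁ : ∀ m, B.repr (w m) i₁ = 0) (h₂ : ∀ m, B.repr (w m) i₂ = 0) :
    Fintype.card ι + 2 ≤ Fintype.card κ := by
  set s : Finset κ := {i₁, i₂}ᶜ
  have hspan : Set.range w ≤ Submodule.span R (s.image B : Set M) := by
    rintro _ ⟨m, rfl⟩
    rw [SetLike.mem_coe, Finset.coe_image, B.mem_span_image]
    intro j hj
    simp only [s, Finset.coe_compl, Finset.coe_insert, Finset.coe_singleton, Set.mem_compl_iff,
      Set.mem_insert_iff, Set.mem_singleton_iff]
    rintro (rfl | rfl) <;> simp_all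
  have hle := linearIndependent_le_span_aux' w hw _ hspan
  simp only [Finset.coe_sort_coe, Fintype.card_coe] at hle
  have hs : s.card + 2 = Fintype.card κ := by
    rw [← Finset.card_pair h12]
    exact Finset.card_compl_add_card _
  have := Finset.card_image_le (s := s) (f := B)
  omega

theorem Function.Injective.extend_zero_nonneg_of_notMem {α β R : Type*} [Zero R] [Preorder R]
    {f : α → β} (hf : Injective f) {r : α → R} {A : Set β}
    (hr : ∀ a, f a ∉ A → 0 ≤ r a)
    {x : β} (hx : x ∉ A) : 0 ≤ extend f r 0 x := by
  by_cases hxf : ∃ a, f a = x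
  · obtain ⟨a, rfl⟩ := hxf
    rw [hf.extend_apply]
    exact hr a hx
  · rw [extend_apply' _ _ _ hxf]
    rfl

theorem Finset.sum_smul_self_eq_sum_comp {ι R V : Type*} [Fintype ι] [DecidableEq V] [Semiring R]
    [AddCommMonoid V] [Module R V] {f : ι → V} (hf : Injective f) {D : Finset V}
    (hD : ∀ i, f i ∈ D) {ψ : V → R} (hψ : ∀ x, x ∉ Set.range f → ψ x = 0) :
    ∑ x ∈ D, ψ x • x = ∑ i, ψ (f i) • f i := by
  rw [← Finset.sum_image (f := fun x => ψ x • x) hf.injOn]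
  refine (Finset.sum_subset ?_ fun x _ hx => ?_).symm
  · rintro _ hx
    obtain ⟨i, -, rfl⟩ := Finset.mem_image.1 hx
    exact hD i
  · rw [hψ x (by simpa using hx), zero_smul]

theorem Finset.sum_filter_pos_smul_eq_sum_filter_neg_smul {ι R V : Type*} [Fintype ι]
    [DecidableEq V] [CommRing R] [LinearOrder R] [IsStrictOrderedRing R] [AddCommGroup V]
    [Module R V]
    {f h : ι → V} (hf : Injective f) (hh : Injective h) {D : Finset V} (hfD : ∀ i, f i ∈ D)
    (hhD : ∀ j, h j ∈ D) {d : V → R} (hd : ∑ x ∈ D, d x • x = 0)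
    (hpos : ∀ x, 0 < d x → x ∈ Set.range f) (hneg : ∀ x, d x < 0 → x ∈ Set.range h) :
    ∑ i ∈ univ.filter (fun i => 0 < d (f i)), d (f i) • f i
      = ∑ j ∈ univ.filter (fun j => d (h j) < 0), (-d (h j)) • h j := by
  set p : V → R := fun x => if 0 < d x then d x else 0
  set q : V → R := fun x => if d x < 0 then -d x else 0
  have hpq : ∑ x ∈ D, p x • x = ∑ x ∈ D, q x • x := by
    rw [← sub_eq_zero, ← Finset.sum_sub_distrib, ← hd]
    refine Finset.sum_congr rfl fun x _ => ?_
    rw [← sub_smul]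
    congr 1
    simp only [p, q]
    split_ifs <;> linarith
  rw [Finset.sum_smul_self_eq_sum_comp hf hfD fun x hx => if_neg fun hx' => hx (hpos x hx'),
    Finset.sum_smul_self_eq_sum_comp hh hhD fun x hx => if_neg fun hx' => hx (hneg x hx')] at hpq
  simpa only [Finset.sum_filter, p, q, ite_smul, zero_smul] using hpq

namespace GSystem

variable {n : ℕ} {T : Type} {t₀ : T} (S : GSystem n T t₀)

theorem injective (t : T) : Injective (S.g t) := (S.indep t).injective

noncomputable def basis (t : T) : Module.Basis (Fin n) ℤ (Fin n → ℤ) :=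
  Module.Basis.mk (S.indep t) (S.span t).ge

theorem sum_repr_smul (t : T) (x : Fin n → ℤ) :
    ∑ i, (S.basis t).repr x i • S.g t i = x := by
  simpa [basis] using (S.basis t).sum_repr x

/-- Subtracting the two expansions and moving the negative coefficients to the other side
gives two positive combinations that the uniqueness condition matches term by term. -/
theorem mem_range_of_sum_smul_eq {u v : T} {r s : Fin n → ℤ}
    (heq : ∑ i, r i • S.g u i = ∑ j, s j • S.g v j)
    (hr : ∀ i, S.g u i ∉ Set.range (S.g v) → 0 ≤ r i)
    (hs : ∀ j, S.g v j ∉ Set.range (S.g u) → 0 ≤ s j) {i : Fin n} (hi : 0 < r i) :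
    S.g u i ∈ Set.range (S.g v) := by
  classical
  by_contra hiv
  set d : (Fin n → ℤ) → ℤ := extend (S.g u) r 0 - extend (S.g v) s 0
  have hd_pos : ∀ x, 0 < d x → x ∈ Set.range (S.g u) := by
    intro x hx
    by_contra hxu
    have := (S.injective v).extend_zero_nonneg_of_notMem hs hxu
    simp only [d, Pi.sub_apply, extend_apply' (f := S.g u) _ _ _ hxu, Pi.zero_apply] at hx
    linarith
  have hd_neg : ∀ x, d x < 0 → x ∈ Set.range (S.g v) := by
    intro x hx
    by_contra hxv
    have := (S.injective u).extend_zero_nonneg_of_notMem hr hxv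
    simp only [d, Pi.sub_apply, extend_apply' (f := S.g v) _ _ _ hxv, Pi.zero_apply] at hx
    linarith
  set D := Finset.univ.image (S.g u) ∪ Finset.univ.image (S.g v)
  have hd : ∑ x ∈ D, d x • x = 0 := by
    simp only [d, Pi.sub_apply, sub_smul, Finset.sum_sub_distrib]
    rw [Finset.sum_smul_self_eq_sum_comp (S.injective u) (by simp [D])
        fun x hx => extend_apply' (f := S.g u) _ _ _ hx,
      Finset.sum_smul_self_eq_sum_comp (S.injective v) (by simp [D])
        fun x hx => extend_apply' (f := S.g v) _ _ _ hx]
    simp only [(S.injective u).extend_apply, (S.injective v).extend_apply, heq, sub_self]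
  obtain ⟨σ, hσ, hσeq⟩ := S.uniqueness u v _ _ _ (fun j => -d (S.g v j))
    (fun _ hk => (mem_filter.1 hk).2) (fun _ hk => neg_pos.2 (mem_filter.1 hk).2)
    (Finset.sum_filter_pos_smul_eq_sum_filter_neg_smul (S.injective u) (S.injective v)
      (by simp [D]) (by simp [D]) hd hd_pos hd_neg)
  have hiP : i ∈ univ.filter (fun k => 0 < d (S.g u k)) := by
    simpa [d, (S.injective u).extend_apply, extend_apply' (f := S.g v) _ _ _ hiv] using hi
  obtain ⟨j, hj, rfl⟩ := hσ.surjOn hiP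
  exact hiv ⟨j, (hσeq j hj).2⟩

variable {S}

theorem IsCoB.repr_nonneg {J : Set (Fin n → ℤ)} {t u : T} (hu : S.IsCoB J t u) (k : Fin n)
    {i : Fin n} (hi : S.g u i ∉ J) : 0 ≤ (S.basis u).repr (S.g t k) i :=
  hu.2 k _ (S.sum_repr_smul u _).symm i hi

theorem repr_eq_zero_of_isCoB {J : Set (Fin n → ℤ)} {t t' u v : T} (hu : S.IsCoB J t u)
    (hv : S.IsCoB J t' v) {k : Fin n} (hk : S.g t k ∈ Set.range (S.g t')) {i : Fin n}
    (hi : S.g u i ∉ Set.range (S.g v)) : (S.basis u).repr (S.g t k) i = 0 := by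
  obtain ⟨k', hk'⟩ := hk
  have hiJ : S.g u i ∉ J := fun h => hi (hv.1 h)
  refine le_antisymm (not_lt.1 fun hpos => hi ?_) (hu.repr_nonneg k hiJ)
  refine S.mem_range_of_sum_smul_eq (s := (S.basis v).repr (S.g t k)) ?_
    (fun i' hi' => hu.repr_nonneg k fun h => hi' (hv.1 h))
    (fun j hj => hk' ▸ hv.repr_nonneg k' fun h => hj (hu.1 h)) hpos
  rw [S.sum_repr_smul, S.sum_repr_smul]

theorem IsMutationAt.mem_range {t t' : T} {k : Fin n} (h : S.IsMutationAt t t' k) {m : Fin n}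
    (hm : m ≠ k) : S.g t m ∈ Set.range (S.g t') := by
  have : S.g t m ∈ Set.range (S.g t) \ {S.g t k} :=
    ⟨⟨m, rfl⟩, fun h' => hm (S.injective t h')⟩
  rw [← h] at this
  exact this.2

end GSystem

theorem stmt17_general {n : ℕ} {T : Type} {t₀ : T} (S : GSystem (n + 1) T t₀) (t t' : T)
    (hmut : ∃ k : Fin (n + 1), S.IsMutationAt t t' k)
    (J : Set (Fin (n + 1) → ℤ))
    (u v : T) (hu : S.IsCoB J t u) (hv : S.IsCoB J t' v)
    (hne : Set.range (S.g u) ≠ Set.range (S.g v)) :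
    (Set.range (S.g u) ∩ Set.range (S.g v)).ncard = n ∧
    ∃ k : Fin (n + 1),
      Set.range (S.g u) ∩ Set.range (S.g v) = Set.range (S.g u) \ {S.g u k} := by
  classical
  obtain ⟨k₀, hk₀⟩ := hmut
  have hsub : (Set.range (S.g u) \ Set.range (S.g v)).Subsingleton := by
    rintro _ ⟨⟨i₁, rfl⟩, h₁⟩ _ ⟨⟨i₂, rfl⟩, h₂⟩
    by_contra h12
    have hrepr (i : Fin (n + 1)) (hi : S.g u i ∉ Set.range (S.g v)) (m : {m // m ≠ k₀}) :=
      S.repr_eq_zero_of_isCoB hu hv (hk₀.mem_range m.2) hi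
    have := (S.basis u).card_add_two_le_of_repr_eq_zero
      ((S.indep t).comp _ Subtype.val_injective) (fun h => h12 (congrArg _ h))
      (hrepr i₁ h₁) (hrepr i₂ h₂)
    simp at this
  obtain ⟨_, ⟨k, rfl⟩, hk⟩ := Set.exists_inter_eq_diff_singleton_of_subsingleton
    (Set.finite_range _) (by rw [Set.ncard_range_of_injective (S.injective v),
      Set.ncard_range_of_injective (S.injective u)]) hne hsub
  refine ⟨?_, k, hk⟩
  rw [hk, Set.ncard_sdiff_singleton_of_mem (Set.mem_range_self k),
    Set.ncard_range_of_injective (S.injective u)]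
  simp

/-- The key step of Theorem 5.2.1: suppose `G_{t'} = μ_g(G_t)` is a mutation of
`G_t`, `J ⊆ G_{t₀}` with `G_u = T_J(G_t)` and `G_v = T_J(G_{t'})`. If
`G_u ≠ G_v` then they have exactly `n - 1` common vectors, i.e. they are
related by a single mutation. (Ambient rank `n + 1`, so `n - 1` becomes `n`.) -/
theorem stmt17 {n : ℕ} {T : Type} {t₀ : T} (S : GSystem (n + 1) T t₀) (t t' : T)
    (hmut : ∃ k : Fin (n + 1), S.IsMutationAt t t' k)
    (J : Set (Fin (n + 1) → ℤ)) (hJ : J ⊆ Set.range (S.g t₀))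
    (u v : T) (hu : S.IsCoB J t u) (hv : S.IsCoB J t' v)
    (hne : Set.range (S.g u) ≠ Set.range (S.g v)) :
    (Set.range (S.g u) ∩ Set.range (S.g v)).ncard = n ∧
    ∃ k : Fin (n + 1),
      Set.range (S.g u) ∩ Set.range (S.g v) = Set.range (S.g u) \ {S.g u k} :=
  stmt17_general S t t' hmut J u v hu hv hne
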